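/- arXiv:2207.05237 — 2 statements merged into one kernel-verified Lean document; each statement's English description precedes it below -/
import Mathlib

section
/- Let M, N be φ-modules whose underlying 𝔖_A-modules are finitely generated and projective, and suppose there is an integer λ ≥ 0 such that u^λ·M is contained in the 𝔖_A-submodule of M generated by φ_M(M) (i.e. M has finite height; in the paper this holds with λ = eah for a Breuil–Kisin module of height at most h over a ℤ/p^aℤ-algebra). Then Hom_K(M, N) is a finitely generated A-module. -/
noncomputable section

open scoped TensorProduct

attribute [local instance] Algebra.TensorProduct.rightAlgebra

/-- The canonical `ℤ_p`-algebra structure on the Witt vectors of a ring of characteristic `p`. -/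
noncomputable instance wittPadicAlgebra (p : ℕ) [Fact p.Prime]
    (k : Type*) [CommRing k] [CharP k p] : Algebra ℤ_[p] (WittVector p k) :=
  ((WittVector.map (ZMod.castHom dvd_rfl k)).comp
    (WittVector.equiv p).symm.toRingHom).toAlgebra

/-- The Frobenius endomorphism `φ` of `𝔖_A = (W(k) ⊗_{ℤ_p} A)[[u]]` determined by a ring
endomorphism `ψ` of the coefficients together with `u ↦ u^p`:
`Σ c_n u^n ↦ Σ ψ(c_n) u^{pn}`. -/
def phiS {R : Type*} [CommRing R] (p : ℕ) (ψ : R →+* R) (f : PowerSeries R) :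
    PowerSeries R :=
  PowerSeries.mk fun n => if p ∣ n then ψ ((PowerSeries.coeff (R := R) (n / p)) f) else 0

/-- `Hom_K(M, N)`: the `A`-module of `𝔖_A`-linear maps `g : M → N` with `g ∘ φ_M = φ_N ∘ g`. -/
def phiHomSubmodule {S : Type*} [CommRing S] {A : Type*} [CommRing A] [Algebra A S]
    {M N : Type*} [AddCommGroup M] [AddCommGroup N] [Module S M] [Module S N]
    [Module A N] [IsScalarTower A S N]
    (φM : M → M) (φN : N →ₗ[A] N) : Submodule A (M →ₗ[S] N) where
  carrier := { g | ∀ x, g (φM x) = φN (g x) }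
  zero_mem' := by intro x; simp
  add_mem' := by intro g h hg hh x; simp [LinearMap.add_apply, hg x, hh x]
  smul_mem' := by intro t g hg x; simp [LinearMap.smul_apply, hg x]

universe u

/-!
Put `R = W(k) ⊗_{ℤ_p} A`, so `𝔖_A = R⟦u⟧`. Since `p^a = 0` in `A`, the map `w ↦ w ⊗ 1` factors
through the finite ring `W_a(k)`, so `R` is a finite `A`-algebra; in particular `R` and `R⟦u⟧` are
Noetherian.

Let `g ∈ Hom_K(M, N)` with `g(M) ⊆ u^n N` for some `n > λ`. Then
`u^λ g(M) ⊆ g(span φ_M(M)) ⊆ φ_N(u^n N) ⊆ u^{pn} N`, and `u` is regular on the projective module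
`N`, so `g(M) ⊆ u^{pn-λ} N ⊆ u^{n+1} N`. By Krull's intersection theorem `g = 0` as soon as
`g(M) ⊆ u^{λ+1} N`. Hence `Hom_K(M, N)` embeds `A`-linearly into the Noetherian `A`-module of the
coefficients of degree `≤ λ` of the values of `g` on generators of `M`, read in coordinates of a
splitting `N ↪ R⟦u⟧^e`.
-/

namespace WittVector

variable {p : ℕ} [Fact p.Prime] {k : Type*} [CommRing k] [CharP k p] [PerfectRing k p]
  {A : Type*} [CommRing A] [Algebra ℤ_[p] A] {a : ℕ}

theorem tmul_one_eq_of_truncate_eq (hpa : (p : A) ^ a = 0) {w w' : WittVector p k}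
    (h : truncate a w = truncate a w') : w ⊗ₜ[ℤ_[p]] (1 : A) = w' ⊗ₜ[ℤ_[p]] (1 : A) := by
  have hker : w - w' ∈ Ideal.span {(p : WittVector p k) ^ a} := by
    rw [mem_span_p_pow_iff_le_coeff_eq_zero, ← mem_ker_truncate, RingHom.mem_ker, map_sub, h,
      sub_self]
  obtain ⟨z, hz⟩ := Ideal.mem_span_singleton'.mp hker
  rw [← sub_eq_zero, ← TensorProduct.sub_tmul, ← hz, ← map_natCast (algebraMap ℤ_[p] _),
    ← map_pow, ← Algebra.commutes, ← Algebra.smul_def, TensorProduct.smul_tmul, Algebra.smul_def]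
  simp [hpa]

theorem finite_tensorProduct [Fintype k] (hpa : (p : A) ^ a = 0) :
    Module.Finite A (WittVector p k ⊗[ℤ_[p]] A) := by
  have hfin : (Set.range fun w : WittVector p k => w ⊗ₜ[ℤ_[p]] (1 : A)).Finite := by
    refine (Set.finite_range fun t =>
      Function.surjInv (truncate_surjective p a k) t ⊗ₜ[ℤ_[p]] (1 : A)).subset ?_
    rintro _ ⟨w, rfl⟩
    exact ⟨truncate a w,
      tmul_one_eq_of_truncate_eq hpa (Function.surjInv_eq (truncate_surjective p a k) _)⟩
  refine ⟨⟨hfin.toFinset, Submodule.eq_top_iff'.mpr fun x => ?_⟩⟩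
  induction x with
  | zero => exact zero_mem _
  | add x y hx hy => exact add_mem hx hy
  | tmul w c =>
    have htmul : w ⊗ₜ[ℤ_[p]] c = c • (w ⊗ₜ[ℤ_[p]] (1 : A)) := by
      simp [Algebra.smul_def, Algebra.TensorProduct.algebraMap_eq_includeRight]
    rw [htmul]
    exact Submodule.smul_mem _ c (Submodule.subset_span (by simp))

end WittVector

namespace Submodule

variable {S M N : Type*} [CommRing S] [AddCommGroup M] [Module S M] [AddCommGroup N] [Module S N]

open Pointwise in
theorem mem_span_singleton_pow_smul_top {x : S} {n : ℕ} {y : N} :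
    y ∈ Ideal.span {x} ^ n • (⊤ : Submodule S N) ↔ ∃ z, x ^ n • z = y := by
  simp [Ideal.span_singleton_pow, ideal_span_singleton_smul, mem_smul_pointwise_iff_exists]

variable {x : S} {p lam : ℕ} {φM : M → M} {φN : N → N} {g : M →ₗ[S] N}

theorem range_le_pow_succ_smul_top (hreg : IsSMulRegular N x) (hp : 2 ≤ p)
    (hφN : ∀ n, Set.MapsTo φN (Ideal.span {x} ^ n • ⊤ : Submodule S N)
      (Ideal.span {x} ^ (p * n) • ⊤ : Submodule S N))
    (hlam : ∀ y : M, x ^ lam • y ∈ span S (Set.range φM))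
    (hg : ∀ y, g (φM y) = φN (g y)) {n : ℕ} (hn : lam < n)
    (hgn : LinearMap.range g ≤ Ideal.span {x} ^ n • ⊤) :
    LinearMap.range g ≤ Ideal.span {x} ^ (n + 1) • ⊤ := by
  rintro _ ⟨y, rfl⟩
  have hspan : span S (Set.range φM) ≤ (Ideal.span {x} ^ (p * n) • ⊤ : Submodule S N).comap g := by
    rw [span_le]
    rintro _ ⟨z, rfl⟩
    rw [SetLike.mem_coe, mem_comap, hg]
    exact hφN n (hgn ⟨z, rfl⟩)
  obtain ⟨z, hz⟩ := mem_span_singleton_pow_smul_top.mp (hspan (hlam y))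
  have h2n : 2 * n ≤ p * n := Nat.mul_le_mul_right n hp
  have hsplit : p * n = lam + (p * n - lam) := by omega
  rw [hsplit, pow_add, mul_smul, map_smul] at hz
  have hgy : x ^ (p * n - lam) • z = g y := hreg.pow lam hz
  exact pow_smul_top_le _ _ (by omega) (mem_span_singleton_pow_smul_top.mpr ⟨z, hgy⟩)

theorem range_eq_bot_of_le_pow_smul_top (hreg : IsSMulRegular N x)
    (hsep : ⨅ n, Ideal.span {x} ^ n • (⊤ : Submodule S N) = ⊥) (hp : 2 ≤ p)
    (hφN : ∀ n, Set.MapsTo φN (Ideal.span {x} ^ n • ⊤ : Submodule S N)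
      (Ideal.span {x} ^ (p * n) • ⊤ : Submodule S N))
    (hlam : ∀ y : M, x ^ lam • y ∈ span S (Set.range φM))
    (hg : ∀ y, g (φM y) = φN (g y))
    (hg0 : LinearMap.range g ≤ Ideal.span {x} ^ (lam + 1) • ⊤) :
    g = 0 := by
  have hall : ∀ n, lam + 1 ≤ n → LinearMap.range g ≤ Ideal.span {x} ^ n • ⊤ :=
    Nat.le_induction hg0 fun n hn => range_le_pow_succ_smul_top hreg hp hφN hlam hg hn
  rw [← LinearMap.range_eq_bot, eq_bot_iff, ← hsep]
  exact le_iInf fun n =>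
    (hall (n + lam + 1) (by omega)).trans (pow_smul_top_le _ _ (by omega))

end Submodule

theorem Submodule.fg_of_range_le_imp_eq_zero {A S M N T : Type*} [CommRing A] [CommRing S]
    [Algebra A S] [AddCommGroup M] [Module S M] [Module.Finite S M] [AddCommGroup N] [Module S N]
    [Module A N] [IsScalarTower A S N] [AddCommGroup T] [Module A T] [IsNoetherian A T]
    {N' : Submodule S N} (c : N →ₗ[A] T) (hc : LinearMap.ker c ≤ N'.restrictScalars A)
    (P : Submodule A (M →ₗ[S] N)) (hP : ∀ g ∈ P, LinearMap.range g ≤ N' → g = 0) : P.FG := by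
  obtain ⟨d, m, hm⟩ := Module.Finite.exists_fin (R := S) (M := M)
  let Θ : (M →ₗ[S] N) →ₗ[A] (Fin d → T) :=
    { toFun := fun g i => c (g (m i))
      map_add' := fun g h => by ext; simp
      map_smul' := fun a g => by ext; simp }
  have hinj : Function.Injective (Θ ∘ₗ P.subtype) := by
    rw [← LinearMap.ker_eq_bot, LinearMap.ker_eq_bot']
    rintro ⟨g, hg⟩ hΘ
    refine Subtype.ext (hP g hg ?_)
    rw [LinearMap.range_eq_map, ← hm, Submodule.map_span_le]
    rintro _ ⟨i, rfl⟩
    exact hc (congrFun hΘ i)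
  have := isNoetherian_of_injective _ hinj
  exact Module.Finite.iff_fg.mp inferInstance

namespace PowerSeries

variable {R N : Type*} [CommRing R] [AddCommGroup N] [Module (PowerSeries R) N]

theorem X_mem_jacobson_bot : (X : PowerSeries R) ∈ Ideal.jacobson ⊥ :=
  Ideal.mem_jacobson_bot.mpr fun y => isUnit_iff_constantCoeff.mpr (by simp)

theorem isRegular_X : IsRegular (X : PowerSeries R) :=
  (Commute.isRegular_iff (Commute.all X)).mpr X_mul_injective

theorem iInf_span_X_pow_smul_top [IsNoetherianRing R] [Module.Finite (PowerSeries R) N] :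
    ⨅ n, Ideal.span {(X : PowerSeries R)} ^ n • (⊤ : Submodule (PowerSeries R) N) = ⊥ :=
  Ideal.iInf_pow_smul_eq_bot_of_le_jacobson _
    ((Ideal.span_singleton_le_iff_mem _).mpr X_mem_jacobson_bot)

theorem exists_ker_le_span_X_pow_smul_top (A : Type*) [CommRing A] [Algebra A R]
    [Module.Finite (PowerSeries R) N] [Module.Projective (PowerSeries R) N]
    [Module A N] [IsScalarTower A (PowerSeries R) N] (n : ℕ) :
    ∃ (e : ℕ) (c : N →ₗ[A] (Fin e → Fin n → R)),
      LinearMap.ker c ≤ (Ideal.span {(X : PowerSeries R)} ^ n • ⊤ :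
        Submodule (PowerSeries R) N).restrictScalars A := by
  obtain ⟨e, π, hπ⟩ := Module.Finite.exists_fin' (PowerSeries R) N
  obtain ⟨ι, hι⟩ := Module.projective_lifting_property π LinearMap.id hπ
  let coeffs : (Fin e → PowerSeries R) →ₗ[A] (Fin e → Fin n → R) :=
    LinearMap.pi fun l => LinearMap.pi fun j =>
      ((coeff (R := R) j).restrictScalars A) ∘ₗ (LinearMap.proj l)
  refine ⟨e, coeffs ∘ₗ ι.restrictScalars A, fun y hy => ?_⟩
  have hdvd : ∀ l, (X : PowerSeries R) ^ n ∣ ι y l := fun l =>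
    X_pow_dvd_iff.mpr fun j hj => congrFun (congrFun hy l) ⟨j, hj⟩
  choose q hq using hdvd
  have hιy : (X : PowerSeries R) ^ n • q = ι y := funext fun l => by simp [hq]
  refine Submodule.mem_span_singleton_pow_smul_top.mpr ⟨π q, ?_⟩
  rw [← map_smul, hιy, ← LinearMap.comp_apply, hι, LinearMap.id_apply]

end PowerSeries

theorem phiS_X_pow {R : Type*} [CommRing R] {p : ℕ} (hp : 0 < p) (ψ : R →+* R) (n : ℕ) :
    phiS p ψ ((PowerSeries.X : PowerSeries R) ^ n) = PowerSeries.X ^ (p * n) := by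
  ext m
  simp only [phiS, PowerSeries.coeff_mk, PowerSeries.coeff_X_pow]
  split_ifs with hd h1 h2 h2 h2
  · exact map_one ψ
  · exact absurd (by rw [← h1, Nat.mul_div_cancel' hd]) h2
  · exact absurd (by rw [h2, Nat.mul_div_cancel_left n hp]) h1
  · exact map_zero ψ
  · exact absurd (h2 ▸ dvd_mul_right p n) hd
  · rfl

theorem phiHomSubmodule_fg {A R : Type*} [CommRing A] [IsNoetherianRing A] [CommRing R]
    [Algebra A R] [Module.Finite A R] {p : ℕ} (hp : 2 ≤ p) (ψ : R →+* R)
    {M N : Type*} [AddCommGroup M] [Module (PowerSeries R) M] [Module.Finite (PowerSeries R) M]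
    [AddCommGroup N] [Module (PowerSeries R) N] [Module.Finite (PowerSeries R) N]
    [Module.Projective (PowerSeries R) N] [Module A N] [IsScalarTower A (PowerSeries R) N]
    (φM : M → M) (φN : N →ₗ[A] N)
    (hφN : ∀ (s : PowerSeries R) (x : N), φN (s • x) = phiS p ψ s • φN x) {lam : ℕ}
    (hlam : ∀ x : M, (PowerSeries.X : PowerSeries R) ^ lam • x ∈
      Submodule.span (PowerSeries R) (Set.range φM)) :
    (phiHomSubmodule (S := PowerSeries R) φM φN).FG := by
  have : IsNoetherian A R := isNoetherian_of_isNoetherianRing_of_finite A R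
  have : IsNoetherianRing R := isNoetherian_of_tower A this
  have hφN_filtration : ∀ n, Set.MapsTo φN
      (Ideal.span {(PowerSeries.X : PowerSeries R)} ^ n • ⊤ : Submodule (PowerSeries R) N)
      (Ideal.span {(PowerSeries.X : PowerSeries R)} ^ (p * n) • ⊤ :
        Submodule (PowerSeries R) N) := by
    intro n y hy
    obtain ⟨z, rfl⟩ := Submodule.mem_span_singleton_pow_smul_top.mp hy
    rw [hφN, phiS_X_pow (by omega)]
    exact Submodule.mem_span_singleton_pow_smul_top.mpr ⟨_, rfl⟩
  obtain ⟨e, c, hc⟩ := PowerSeries.exists_ker_le_span_X_pow_smul_top (R := R) (N := N) A (lam + 1)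
  exact Submodule.fg_of_range_le_imp_eq_zero c hc _ fun g hg =>
    Submodule.range_eq_bot_of_le_pow_smul_top
      (Module.Flat.isSMulRegular_of_isRegular PowerSeries.isRegular_X)
      PowerSeries.iInf_span_X_pow_smul_top hp hφN_filtration hlam hg

theorem phiHom_finitelyGenerated_general
    (p a : ℕ) [Fact p.Prime]
    (k : Type*) [Field k] [Fintype k] [CharP k p]
    (A : Type u) [CommRing A] [IsNoetherianRing A] [Algebra ℤ_[p] A]
    (hpa : (p : A) ^ a = 0)
    (ψ : WittVector p k ⊗[ℤ_[p]] A →+* WittVector p k ⊗[ℤ_[p]] A)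
    (M : Type u) [AddCommGroup M]
    [Module (PowerSeries (WittVector p k ⊗[ℤ_[p]] A)) M]
    [Module.Finite (PowerSeries (WittVector p k ⊗[ℤ_[p]] A)) M]
    (N : Type u) [AddCommGroup N]
    [Module (PowerSeries (WittVector p k ⊗[ℤ_[p]] A)) N]
    [Module.Finite (PowerSeries (WittVector p k ⊗[ℤ_[p]] A)) N]
    [Module.Projective (PowerSeries (WittVector p k ⊗[ℤ_[p]] A)) N]
    [Module A N] [IsScalarTower A (PowerSeries (WittVector p k ⊗[ℤ_[p]] A)) N]
    (φM : M →+ M)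
    (φN : N →ₗ[A] N)
    (hφN : ∀ (s : PowerSeries (WittVector p k ⊗[ℤ_[p]] A)) (x : N),
      φN (s • x) = phiS p ψ s • φN x)
    (lam : ℕ)
    (hlam : ∀ x : M, ((PowerSeries.X : PowerSeries (WittVector p k ⊗[ℤ_[p]] A)) ^ lam) • x ∈
      Submodule.span (PowerSeries (WittVector p k ⊗[ℤ_[p]] A)) (Set.range φM)) :
    (phiHomSubmodule (S := PowerSeries (WittVector p k ⊗[ℤ_[p]] A)) (⇑φM) φN).FG := by
  have := WittVector.finite_tensorProduct (k := k) hpa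
  exact phiHomSubmodule_fg (Fact.out : p.Prime).two_le ψ φM φN hφN hlam

/-- Let `𝔖_A := (W(k) ⊗_{ℤ_p} A)[[u]]` with its Frobenius `φ` (Witt vector Frobenius on
`W(k)`, identity on `A`, `u ↦ u^p`), with `A` Noetherian and `p^a = 0` in `A`.  Let `M`, `N`
be φ-modules that are finitely generated and projective over `𝔖_A`, and suppose `M` has
finite height: `u^λ · M` is contained in the `𝔖_A`-span of `φ_M(M)`.  Then `Hom_K(M, N)` is a
finitely generated `A`-module. -/
theorem phiHom_finitelyGenerated
    (p a : ℕ) [Fact p.Prime] (ha : 1 ≤ a)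
    (k : Type*) [Field k] [Fintype k] [CharP k p]
    (A : Type u) [CommRing A] [IsNoetherianRing A] [Algebra ℤ_[p] A]
    (hpa : (p : A) ^ a = 0)
    (ψ : WittVector p k ⊗[ℤ_[p]] A →+* WittVector p k ⊗[ℤ_[p]] A)
    (hψ : ∀ (w : WittVector p k) (x : A), ψ (w ⊗ₜ x) = WittVector.frobenius w ⊗ₜ x)
    (M : Type u) [AddCommGroup M]
    [Module (PowerSeries (WittVector p k ⊗[ℤ_[p]] A)) M]
    [Module.Finite (PowerSeries (WittVector p k ⊗[ℤ_[p]] A)) M]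
    [Module.Projective (PowerSeries (WittVector p k ⊗[ℤ_[p]] A)) M]
    (N : Type u) [AddCommGroup N]
    [Module (PowerSeries (WittVector p k ⊗[ℤ_[p]] A)) N]
    [Module.Finite (PowerSeries (WittVector p k ⊗[ℤ_[p]] A)) N]
    [Module.Projective (PowerSeries (WittVector p k ⊗[ℤ_[p]] A)) N]
    [Module A N] [IsScalarTower A (PowerSeries (WittVector p k ⊗[ℤ_[p]] A)) N]
    (φM : M →+ M)
    (hφM : ∀ (s : PowerSeries (WittVector p k ⊗[ℤ_[p]] A)) (x : M),
      φM (s • x) = phiS p ψ s • φM x)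
    (φN : N →ₗ[A] N)
    (hφN : ∀ (s : PowerSeries (WittVector p k ⊗[ℤ_[p]] A)) (x : N),
      φN (s • x) = phiS p ψ s • φN x)
    (lam : ℕ)
    (hlam : ∀ x : M, ((PowerSeries.X : PowerSeries (WittVector p k ⊗[ℤ_[p]] A)) ^ lam) • x ∈
      Submodule.span (PowerSeries (WittVector p k ⊗[ℤ_[p]] A)) (Set.range φM)) :
    (phiHomSubmodule (S := PowerSeries (WittVector p k ⊗[ℤ_[p]] A)) (⇑φM) φN).FG :=
  phiHom_finitelyGenerated_general p a k A hpa ψ M N φM φN hφN lam hlam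

end
end

section
/- If c ∈ Λ and μ ∈ Λ[[u]][1/u] satisfy μ = c·μ(u^q), then μ lies in the image of Λ (i.e. μ is a constant); if moreover μ is a unit of Λ[[u]][1/u], then c = 1. (This is the key computation in the proof that two unramified twists M_{Λ,λ} and M_{Λ,λ'} of a fixed rank one Breuil–Kisin module or étale φ-module with descent data are isomorphic only if λ = λ'.) -/
/-- The substitution `u ↦ u^q` on the ring `Λ[[u]][1/u]` of Laurent series over a commutative
ring `Λ` (realized as Hahn series over `ℤ`, whose elements are exactly the series with support
bounded below, i.e. `Λ[[u]][1/u]`).  It is the map induced on coefficients by the order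
embedding `n ↦ q * n` of `ℤ` into itself; it agrees with the ring endomorphism of
`Λ[[u]][1/u]` extending `u ↦ u^q` on `Λ[[u]]`. -/
noncomputable def substLaurent {Λ : Type*} [CommRing Λ] (q : ℕ) (hq : 0 < q)
    (μ : LaurentSeries Λ) : LaurentSeries Λ :=
  HahnSeries.embDomain
    (OrderEmbedding.ofStrictMono (fun n : ℤ => (q : ℤ) * n)
      (fun m n h => mul_lt_mul_of_pos_left h (by exact_mod_cast hq))) μ

/-!
Comparing coefficients, `μ = c • μ(u^q)` says that `μₙ = c μ_{n/q}` when `q ∣ n` and `μₙ = 0`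
otherwise. Since `|n/q| < |n|` for `n ≠ 0`, descending along `n, n/q, n/q², …` kills every
coefficient outside degree `0`. For a unit `μ = l`, the constant `l` is a unit of `Λ`, and
`l = c l` forces `c = 1`.
-/

open HahnSeries

theorem HahnSeries.isUnit_of_isUnit_single_zero {Γ R : Type*} [AddCommMonoid Γ] [PartialOrder Γ]
    [IsOrderedCancelAddMonoid Γ] [CommSemiring R] {l : R} (h : IsUnit (single (0 : Γ) l)) :
    IsUnit l := by
  obtain ⟨v, hv⟩ := h.exists_right_inv
  have hcoeff : l * v.coeff 0 = 1 := by
    simpa only [coeff_single_zero_mul, coeff_one, if_true] using congrArg (coeff · 0) hv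
  exact .of_mul_eq_one _ hcoeff

namespace substLaurent

variable {Λ : Type*} [CommRing Λ] {q : ℕ}

theorem coeff_natCast_mul (hq : 0 < q) (μ : LaurentSeries Λ) (n : ℤ) :
    (substLaurent q hq μ).coeff (q * n) = μ.coeff n :=
  embDomain_coeff (a := n)

@[simp]
theorem coeff_zero (hq : 0 < q) (μ : LaurentSeries Λ) :
    (substLaurent q hq μ).coeff 0 = μ.coeff 0 := by
  simpa using coeff_natCast_mul hq μ 0

theorem coeff_of_not_dvd (hq : 0 < q) (μ : LaurentSeries Λ) {n : ℤ} (hn : ¬(q : ℤ) ∣ n) :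
    (substLaurent q hq μ).coeff n = 0 :=
  embDomain_of_notMem_range fun ⟨m, hm⟩ => hn ⟨m, hm.symm⟩

variable {c : Λ} {μ : LaurentSeries Λ}

theorem coeff_eq_zero_of_eq_single_mul (hq : 1 < q)
    (hμ : μ = single (0 : ℤ) c * substLaurent q (by omega) μ) {n : ℤ} (hn : n ≠ 0) :
    μ.coeff n = 0 := by
  have hcoeff : ∀ n : ℤ, μ.coeff n = c * (substLaurent q (by omega) μ).coeff n := fun n => by
    conv_lhs => rw [hμ]
    exact coeff_single_zero_mul
  induction h : n.natAbs using Nat.strong_induction_on generalizing n with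
  | _ k ih =>
    by_cases hdvd : (q : ℤ) ∣ n
    · obtain ⟨m, rfl⟩ := hdvd
      have hm : m ≠ 0 := right_ne_zero_of_mul hn
      have hlt : m.natAbs < k := by
        rw [← h, Int.natAbs_mul, Int.natAbs_natCast]
        exact lt_mul_left (Int.natAbs_pos.mpr hm) hq
      rw [hcoeff, coeff_natCast_mul, ih _ hlt hm rfl, mul_zero]
    · rw [hcoeff, coeff_of_not_dvd _ _ hdvd, mul_zero]

theorem eq_single_coeff_zero_of_eq_single_mul (hq : 1 < q)
    (hμ : μ = single (0 : ℤ) c * substLaurent q (by omega) μ) :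
    μ = single (0 : ℤ) (μ.coeff 0) := by
  ext n
  by_cases hn : n = 0
  · rw [hn, coeff_single_same]
  · rw [coeff_eq_zero_of_eq_single_mul hq hμ hn, coeff_single_of_ne hn]

end substLaurent

/-- If `c ∈ Λ` and `μ ∈ Λ[[u]][1/u]` satisfy `μ = c • μ(u^q)`, then `μ` is a constant
(it lies in the image of `Λ`); and if moreover `μ` is a unit, then `c = 1`. -/
theorem constant_of_eq_smul_subst {Λ : Type*} [CommRing Λ] (q : ℕ) (hq : 2 ≤ q)
    (c : Λ) (μ : LaurentSeries Λ)
    (hμ : μ = HahnSeries.single (0 : ℤ) c * substLaurent q (by omega) μ) :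
    (∃ l : Λ, μ = HahnSeries.single (0 : ℤ) l) ∧ (IsUnit μ → c = 1) := by
  have hconst := substLaurent.eq_single_coeff_zero_of_eq_single_mul hq hμ
  refine ⟨⟨_, hconst⟩, fun hunit => ?_⟩
  have hl : IsUnit (μ.coeff 0) := isUnit_of_isUnit_single_zero (hconst ▸ hunit)
  have hfix : c * μ.coeff 0 = 1 * μ.coeff 0 := by
    have h0 := congrArg (coeff · 0) hμ
    rw [coeff_single_zero_mul, substLaurent.coeff_zero] at h0
    rw [← h0, one_mul]
  exact hl.mul_right_cancel hfix
end
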